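/- In the interlaced ortree on indices 1..2^(n+1)-1 (leaves odd, internal nodes even), the depth of the tree is n, and updating the stored OR values along the path from a changed leaf to the root—i.e., the sequence of operations p := p AND -4; fill[p+2] := fill[p+1] OR fill[p+3]; p := p AND -8; fill[p+4] := fill[p+2] OR fill[p+6]; ...; p := p AND -2^(k+1); fill[p + 2^k] := fill[p + 2^(k-1)] OR fill[p + 3·2^(k-1)] for k = 1..n—restores the invariant that every internal node stores the OR of its children, touching exactly n internal nodes, namely all ancestors of the changed leaf. -/

import Mathlib

/-- The internal index updated at step `k`: clear the low `k+1` bits of `p`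
(`p &&& -2^(k+1)`) and add `2^k`. -/
def updIdx (p k : ℕ) : ℕ := p - p % 2 ^ (k + 1) + 2 ^ k

/-- One update step of `ortree_update`: store at `updIdx p k` the OR of its two
children `updIdx p k - 2^(k-1)` and `updIdx p k + 2^(k-1)`. -/
def updStep (g : ℕ → ℕ) (p k : ℕ) : ℕ → ℕ :=
  Function.update g (updIdx p k)
    (g (updIdx p k - 2 ^ (k - 1)) ||| g (updIdx p k + 2 ^ (k - 1)))

/-- Running the update steps for levels `1, 2, ..., k`. -/
def runUpd (g : ℕ → ℕ) (p : ℕ) : ℕ → (ℕ → ℕ)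
  | 0 => g
  | k + 1 => updStep (runUpd g p k) p (k + 1)

/-!
An internal node of level `s` is an index `m` with `m = 2^s · (odd)`; its subtree covers exactly
the leaves in the open interval `(m - 2^s, m + 2^s)`, so the ancestor of the odd leaf `p` at
level `s` is the unique level-`s` node whose interval contains `p`, namely `updIdx p s`.
Consequently the parent of an ancestor is again an ancestor, and the node written at step `k`
is a child only of the node written at step `k + 1`. By induction on the number of steps,
after step `k` the OR-invariant holds at every node except possibly at the ancestors of levels
`> k`, whose values have not been recomputed yet.
-/

open Function

def IsNode (s m : ℕ) : Prop := ∃ q, m = q * 2 ^ (s + 1) + 2 ^ s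

def IsOrOfChildren (g : ℕ → ℕ) (s m : ℕ) : Prop :=
  g m = g (m - 2 ^ (s - 1)) ||| g (m + 2 ^ (s - 1))

namespace IsNode

variable {s t m : ℕ}

lemma padicValNat_eq (h : IsNode s m) : padicValNat 2 m = s := by
  obtain ⟨q, rfl⟩ := h
  have hodd : ¬ 2 ∣ 2 * q + 1 := by omega
  rw [show q * 2 ^ (s + 1) + 2 ^ s = 2 ^ s * (2 * q + 1) by ring,
    padicValNat.mul (by positivity) (by omega), padicValNat.prime_pow,
    padicValNat.eq_zero_of_not_dvd hodd, add_zero]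

lemma level_unique (hs : IsNode s m) (ht : IsNode t m) : s = t :=
  hs.padicValNat_eq.symm.trans ht.padicValNat_eq

lemma pow_le (h : IsNode s m) : 2 ^ s ≤ m := by
  obtain ⟨q, rfl⟩ := h
  exact Nat.le_add_left _ _

lemma sub_pow (h : IsNode (t + 1) m) : IsNode t (m - 2 ^ t) := by
  obtain ⟨q, rfl⟩ := h
  refine ⟨2 * q, ?_⟩
  rw [pow_succ' 2 (t + 1), pow_succ' 2 t]
  have : q * (2 * (2 * 2 ^ t)) = 2 * q * (2 * 2 ^ t) := by ring
  omega

lemma add_pow (h : IsNode (t + 1) m) : IsNode t (m + 2 ^ t) := by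
  obtain ⟨q, rfl⟩ := h
  refine ⟨2 * q + 1, ?_⟩
  rw [pow_succ' 2 (t + 1), pow_succ' 2 t]
  ring

end IsNode

lemma updIdx_eq (p k : ℕ) : updIdx p k = p / 2 ^ (k + 1) * 2 ^ (k + 1) + 2 ^ k := by
  have := Nat.div_add_mod' p (2 ^ (k + 1))
  unfold updIdx
  omega

lemma isNode_updIdx (p k : ℕ) : IsNode k (updIdx p k) :=
  ⟨p / 2 ^ (k + 1), updIdx_eq p k⟩

lemma updIdx_sub_pow_lt {p : ℕ} (hp : Odd p) (k : ℕ) : updIdx p k - 2 ^ k < p := by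
  have hmod : p % 2 ^ (k + 1) ≠ 0 := fun h =>
    (Nat.not_even_iff_odd.mpr hp) (even_iff_two_dvd.mpr
      ((dvd_pow_self 2 k.succ_ne_zero).trans (Nat.dvd_of_mod_eq_zero h)))
  have := Nat.mod_le p (2 ^ (k + 1))
  unfold updIdx
  omega

lemma lt_updIdx_add_pow (p k : ℕ) : p < updIdx p k + 2 ^ k := by
  have := Nat.mod_lt p (Nat.two_pow_pos (k + 1))
  have := Nat.mod_le p (2 ^ (k + 1))
  have := pow_succ 2 k
  unfold updIdx
  omega

lemma IsNode.eq_updIdx {p s m : ℕ} (hm : IsNode s m) (hl : m - 2 ^ s < p)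
    (hr : p < m + 2 ^ s) : m = updIdx p s := by
  obtain ⟨q, rfl⟩ := hm
  have := pow_succ 2 s
  have hq : p / 2 ^ (s + 1) = q := Nat.div_eq_of_lt_le (by omega) (by rw [add_mul]; omega)
  rw [updIdx_eq, hq]

lemma IsNode.eq_updIdx_of_child_eq_updIdx {p t m k : ℕ} (hp : Odd p) (hm : IsNode (t + 1) m)
    (hc : m - 2 ^ t = updIdx p k ∨ m + 2 ^ t = updIdx p k) :
    k = t ∧ m = updIdx p (t + 1) := by
  have hk : k = t := by
    rcases hc with hc | hc
    · exact (isNode_updIdx p k).level_unique (hc ▸ hm.sub_pow)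
    · exact (isNode_updIdx p k).level_unique (hc ▸ hm.add_pow)
  subst hk
  have hl := updIdx_sub_pow_lt hp k
  have hr := lt_updIdx_add_pow p k
  have := hm.pow_le
  have := pow_succ 2 k
  refine ⟨rfl, hm.eq_updIdx ?_ ?_⟩ <;> omega

lemma isOrOfChildren_update_self (g : ℕ → ℕ) {s m : ℕ} (hm : 0 < m) :
    IsOrOfChildren (update g m (g (m - 2 ^ (s - 1)) ||| g (m + 2 ^ (s - 1)))) s m := by
  have := Nat.two_pow_pos (s - 1)
  unfold IsOrOfChildren
  rw [update_self, update_of_ne (by omega), update_of_ne (by omega)]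

lemma isOrOfChildren_update_iff {g : ℕ → ℕ} {s m a v : ℕ} (hm : m ≠ a)
    (hl : m - 2 ^ (s - 1) ≠ a) (hr : m + 2 ^ (s - 1) ≠ a) :
    IsOrOfChildren (update g a v) s m ↔ IsOrOfChildren g s m := by
  unfold IsOrOfChildren
  rw [update_of_ne hm, update_of_ne hl, update_of_ne hr]

theorem isOrOfChildren_runUpd {g : ℕ → ℕ} {p t m : ℕ} (hp : Odd p) (hm : IsNode (t + 1) m)
    (h0 : m ≠ updIdx p (t + 1) → IsOrOfChildren g (t + 1) m) (k : ℕ)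
    (hk : t + 1 ≤ k ∨ m ≠ updIdx p (t + 1)) : IsOrOfChildren (runUpd g p k) (t + 1) m := by
  induction k with
  | zero => exact h0 (hk.resolve_left (by omega))
  | succ k ih =>
    show IsOrOfChildren (update (runUpd g p k) (updIdx p (k + 1)) _) (t + 1) m
    by_cases hM : m = updIdx p (k + 1)
    · obtain rfl : t = k :=
        Nat.succ_injective (hm.level_unique (hM ▸ isNode_updIdx p (k + 1)))
      subst hM
      exact isOrOfChildren_update_self _ (lt_of_lt_of_le (Nat.two_pow_pos _) hm.pow_le)
    · have hchild : ∀ c, (m - 2 ^ t = c ∨ m + 2 ^ t = c) → c ≠ updIdx p (k + 1) := by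
        rintro c hc rfl
        obtain ⟨rfl, hanc⟩ := hm.eq_updIdx_of_child_eq_updIdx hp hc
        exact (hk.resolve_left (by omega)) hanc
      rw [isOrOfChildren_update_iff hM (hchild _ (.inl rfl)) (hchild _ (.inr rfl))]
      refine ih ?_
      rcases hk with hle | hne
      · obtain hle | rfl : t + 1 ≤ k ∨ t = k := by omega
        exacts [.inl hle, .inr hM]
      · exact .inr hne

theorem ortree_update_correct_general (n : ℕ)
    (p : ℕ) (hp : Odd p)
    (fill : ℕ → ℕ)
    (hinv : ∀ m s, 1 ≤ s → s ≤ n → m < 2 ^ (n + 1) →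
      (∃ q, m = q * 2 ^ (s + 1) + 2 ^ s) → m ≠ updIdx p s →
      fill m = fill (m - 2 ^ (s - 1)) ||| fill (m + 2 ^ (s - 1))) :
    (∀ m s, 1 ≤ s → s ≤ n → m < 2 ^ (n + 1) →
      (∃ q, m = q * 2 ^ (s + 1) + 2 ^ s) →
      runUpd fill p n m =
        runUpd fill p n (m - 2 ^ (s - 1)) ||| runUpd fill p n (m + 2 ^ (s - 1))) ∧
    (∀ k, 1 ≤ k → k ≤ n →
      (∃ q, updIdx p k = q * 2 ^ (k + 1) + 2 ^ k) ∧
      updIdx p k - 2 ^ k < p ∧ p < updIdx p k + 2 ^ k) ∧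
    (∀ m s, 1 ≤ s → s ≤ n → (∃ q, m = q * 2 ^ (s + 1) + 2 ^ s) →
      m - 2 ^ s < p → p < m + 2 ^ s → m = updIdx p s) := by
  refine ⟨fun m s hs hsn hmn hm => ?_,
    fun k _ _ => ⟨isNode_updIdx p k, updIdx_sub_pow_lt hp k, lt_updIdx_add_pow p k⟩,
    fun m s _ _ hm hl hr => IsNode.eq_updIdx hm hl hr⟩
  obtain ⟨t, rfl⟩ := Nat.exists_eq_add_of_le' hs
  exact isOrOfChildren_runUpd hp hm (hinv m (t + 1) hs hsn hmn hm) n (.inl hsn)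

/-- In the interlaced ortree on indices `1, …, 2^(n+1) - 1` (odd leaves, even
internal nodes, depth `n`), after changing the data of the odd leaf `p` the
update sequence of `ortree_update` along levels `1, …, n` restores the
invariant that every internal node stores the OR of its two children; the `n`
updated internal indices `updIdx p 1, …, updIdx p n` are precisely the
ancestors of the leaf `p`. -/
theorem ortree_update_correct (n : ℕ) (hn : 1 ≤ n)
    (p : ℕ) (hp : Odd p) (hpn : p < 2 ^ (n + 1))
    (fill : ℕ → ℕ)
    (hinv : ∀ m s, 1 ≤ s → s ≤ n → m < 2 ^ (n + 1) →
      (∃ q, m = q * 2 ^ (s + 1) + 2 ^ s) → m ≠ updIdx p s →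
      fill m = fill (m - 2 ^ (s - 1)) ||| fill (m + 2 ^ (s - 1))) :
    (∀ m s, 1 ≤ s → s ≤ n → m < 2 ^ (n + 1) →
      (∃ q, m = q * 2 ^ (s + 1) + 2 ^ s) →
      runUpd fill p n m =
        runUpd fill p n (m - 2 ^ (s - 1)) ||| runUpd fill p n (m + 2 ^ (s - 1))) ∧
    (∀ k, 1 ≤ k → k ≤ n →
      (∃ q, updIdx p k = q * 2 ^ (k + 1) + 2 ^ k) ∧
      updIdx p k - 2 ^ k < p ∧ p < updIdx p k + 2 ^ k) ∧
    (∀ m s, 1 ≤ s → s ≤ n → (∃ q, m = q * 2 ^ (s + 1) + 2 ^ s) →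
      m - 2 ^ s < p → p < m + 2 ^ s → m = updIdx p s) :=
  ortree_update_correct_general n p hp fill hinv
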